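/- arXiv:1904.08334 — 2 statements merged into one kernel-verified Lean document; each statement's English description precedes it below -/
import Mathlib

section
/- (Abstract d-dimensional combination-technique convergence.) Let d ≥ 1 be an integer, E a real normed vector space, P ∈ E, and Q : ℕ₀^d → E. Assume (i) ‖ΔQ(l)‖ ≤ C₁·4^{−(l₁+⋯+l_d)} for all l ∈ ℕ₀^d and some constant C₁ > 0, and (ii) Q(m,…,m) → P in E as m → ∞. Then there exists a constant C depending only on d such that for every integer L ≥ 1: ‖ ∑_{l ∈ ℕ₀^d, l₁+⋯+l_d ≤ L} ΔQ(l) − P ‖ ≤ C · C₁ · L^{d−1} · 4^{−L}. -/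
/-!
Summing the mixed differences over a box `[0, M]^d` telescopes to `Q (M, …, M)`, so
`Q (M, …, M)` minus the sum over the simplex `|l| ≤ L` is the sum of `ΔQ l` over the indices of
the box with `|l| > L`. At most `(k + 1)^(d - 1)` indices have `|l| = k`, so hypothesis (i) bounds
this remainder by `C₁ ∑_{k > L} (k + 1)^(d - 1) 4^(-k) ≤ C C₁ L^(d - 1) 4^(-L)`, uniformly in `M`;
letting `M → ∞` gives the claim.
-/

open Finset

section MixedDifference

variable {ι : Type*} [Fintype ι] [DecidableEq ι]

noncomputable def mixedDiff {E : Type*} [AddCommGroup E] [Module ℝ E]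
    (Q : (ι → ℕ) → E) (l : ι → ℕ) : E :=
  ∑ s : ι → Fin 2, if (∀ i, (s i : ℕ) ≤ l i) then
    ((-1 : ℝ) ^ (∑ i, (s i : ℕ))) • Q (fun i => l i - (s i : ℕ)) else 0

theorem sum_sign_of_le {m M : ι → ℕ} (hm : m ≤ M) :
    ∑ s : ι → Fin 2, (if ∀ i, m i + s i ≤ M i then (-1 : ℝ) ^ ∑ i, (s i : ℕ) else 0) =
      if m = M then 1 else 0 := by
  have hcoord (i : ι) :
      ∑ j : Fin 2, (if m i + j ≤ M i then (-1 : ℝ) ^ (j : ℕ) else 0) =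
        if m i = M i then 1 else 0 := by
    rcases (hm i).eq_or_lt with h | h
    · simp [h]
    · simp [Fin.sum_univ_two, h.ne, hm i, Nat.succ_le_of_lt h]
  calc _ = ∑ s : ι → Fin 2, ∏ i, (if m i + s i ≤ M i then (-1 : ℝ) ^ (s i : ℕ) else 0) := by
        simp_rw [Fintype.prod_ite_zero, prod_pow_eq_pow_sum]
    _ = ∏ i, (if m i = M i then (1 : ℝ) else 0) := by
        rw [← Fintype.prod_congr _ _ hcoord, Fintype.prod_sum]
    _ = if m = M then 1 else 0 := by simp [Fintype.prod_ite_zero, funext_iff]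

theorem sum_Iic_sub_eq_sum_Iic_add {β : Type*} [AddCommMonoid β] (M s : ι → ℕ)
    (f : (ι → ℕ) → β) :
    ∑ l ∈ Iic M with ∀ i, s i ≤ l i, f (fun i => l i - s i) =
      ∑ m ∈ Iic M with ∀ i, m i + s i ≤ M i, f m := by
  refine sum_nbij' (fun l i => l i - s i) (fun m i => m i + s i) ?_ ?_ ?_ ?_ fun _ _ => rfl <;>
    intro x hx <;> simp only [mem_filter, mem_Iic, Pi.le_def] at hx ⊢
  · exact ⟨fun i => (Nat.sub_le _ _).trans (hx.1 i), fun i => by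
      have := hx.1 i; have := hx.2 i; omega⟩
  · exact ⟨fun i => hx.2 i, fun i => by omega⟩
  · funext i; have := hx.2 i; omega
  · funext i; omega

theorem sum_Iic_mixedDiff {E : Type*} [AddCommGroup E] [Module ℝ E]
    (Q : (ι → ℕ) → E) (M : ι → ℕ) :
    ∑ l ∈ Iic M, mixedDiff Q l = Q M := by
  calc ∑ l ∈ Iic M, mixedDiff Q l
      = ∑ s : ι → Fin 2, ((-1 : ℝ) ^ ∑ i, (s i : ℕ)) •
          ∑ l ∈ Iic M with ∀ i, (s i : ℕ) ≤ l i, Q (fun i => l i - s i) := by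
        unfold mixedDiff; rw [sum_comm]; simp_rw [smul_sum, sum_filter]
    _ = ∑ s : ι → Fin 2, ((-1 : ℝ) ^ ∑ i, (s i : ℕ)) •
          ∑ m ∈ Iic M with ∀ i, m i + s i ≤ M i, Q m := by
        simp_rw [sum_Iic_sub_eq_sum_Iic_add]
    _ = ∑ m ∈ Iic M, (∑ s : ι → Fin 2,
          (if ∀ i, m i + s i ≤ M i then (-1 : ℝ) ^ ∑ i, (s i : ℕ) else 0)) • Q m := by
        simp_rw [sum_smul, smul_sum, sum_filter, ite_smul, zero_smul]; exact sum_comm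
    _ = Q M := by
        rw [sum_congr rfl fun m hm => by rw [sum_sign_of_le (mem_Iic.mp hm)]]
        simp [ite_smul]

theorem filter_sum_le_Iic_const_eq {L M : ℕ} (h : L ≤ M) :
    {l ∈ Iic (fun _ : ι => M) | ∑ i, l i ≤ L} = {l ∈ Iic (fun _ : ι => L) | ∑ i, l i ≤ L} := by
  ext l
  simp only [mem_filter, mem_Iic, Pi.le_def, and_congr_left_iff]
  intro hsum
  have hle (i : ι) : l i ≤ L :=
    (single_le_sum (f := l) (fun _ _ => Nat.zero_le _) (mem_univ i)).trans hsum
  exact ⟨fun _ => hle, fun _ i => (hle i).trans h⟩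

theorem sum_fin_succ_eq_sum_Iic {β : Type*} [AddCommMonoid β] (n : ℕ) (f : (ι → ℕ) → β) :
    ∑ l : ι → Fin (n + 1), f (fun i => l i) = ∑ l ∈ Iic (fun _ => n), f l := by
  refine sum_bij (fun l _ i => l i) (fun l _ => ?_) (fun a _ b _ h => ?_) (fun m hm => ?_)
    fun _ _ => rfl
  · simpa [Pi.le_def] using fun i => Nat.lt_succ_iff.mp (l i).isLt
  · funext i; exact Fin.ext (congrFun h i)
  · simp only [mem_Iic, Pi.le_def] at hm
    exact ⟨fun i => ⟨m i, Nat.lt_succ_of_le (hm i)⟩, mem_univ _, rfl⟩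

end MixedDifference

theorem card_antidiagonalTuple_le (d k : ℕ) :
    #(Nat.antidiagonalTuple d k) ≤ (k + 1) ^ (d - 1) := by
  cases d with
  | zero => simpa using card_le_one_of_subsingleton _
  | succ e =>
    calc #(Nat.antidiagonalTuple (e + 1) k)
        ≤ #(Fintype.piFinset fun _ : Fin e => range (k + 1)) := by
          refine card_le_card_of_injOn Fin.init (fun x hx => ?_) fun x hx y hy hxy => ?_
          · simp only [mem_coe, Nat.mem_antidiagonalTuple, Fintype.mem_piFinset,
              mem_range, Nat.lt_succ_iff] at hx ⊢
            exact fun i =>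
              (single_le_sum (f := x) (fun _ _ => Nat.zero_le _) (mem_univ _)).trans_eq hx
          · simp only [mem_coe, Nat.mem_antidiagonalTuple, Fin.sum_univ_castSucc] at hx hy
            have hinit : ∑ i : Fin e, x i.castSucc = ∑ i : Fin e, y i.castSucc :=
              congrArg (fun f => ∑ i, f i) hxy
            have hlast : x (Fin.last e) = y (Fin.last e) := by omega
            rw [← Fin.snoc_init_self x, ← Fin.snoc_init_self y, hxy, hlast]
      _ = (k + 1) ^ (e + 1 - 1) := by simp

noncomputable def tailConst (e : ℕ) : ℝ := ∑' j : ℕ, ((j : ℝ) + 2) ^ e * ((4 : ℝ) ^ j)⁻¹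

theorem summable_tailConst (e : ℕ) :
    Summable fun j : ℕ => ((j : ℝ) + 2) ^ e * ((4 : ℝ) ^ j)⁻¹ := by
  have hgeom : Summable fun n : ℕ => (n : ℝ) ^ e * (4⁻¹ : ℝ) ^ n :=
    summable_pow_mul_geometric_of_norm_lt_one e (by norm_num)
  refine ((summable_nat_add_iff 2).mpr hgeom).mul_left 16 |>.congr fun j => ?_
  push_cast
  rw [inv_pow, pow_add]
  field_simp
  ring

theorem tailConst_pos (e : ℕ) : 0 < tailConst e :=
  (summable_tailConst e).tsum_pos (fun _ => by positivity) 0 (by positivity)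

theorem sum_succ_pow_mul_inv_four_pow_le {e L : ℕ} (hL : 1 ≤ L) (K : Finset ℕ)
    (hK : ∀ k ∈ K, L ≤ k) :
    ∑ k ∈ K, ((k : ℝ) + 1) ^ e * ((4 : ℝ) ^ k)⁻¹ ≤ tailConst e * L ^ e * ((4 : ℝ) ^ L)⁻¹ := by
  set g : ℕ → ℝ := fun j => ((j : ℝ) + 2) ^ e * ((4 : ℝ) ^ j)⁻¹
  have hterm : ∀ k ∈ K,
      ((k : ℝ) + 1) ^ e * ((4 : ℝ) ^ k)⁻¹ ≤ L ^ e * ((4 : ℝ) ^ L)⁻¹ * g (k - L) := by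
    intro k hk
    obtain ⟨j, rfl⟩ := Nat.exists_eq_add_of_le (hK k hk)
    have hbase : ((L + j : ℕ) : ℝ) + 1 ≤ L * ((j : ℝ) + 2) := by
      have : (1 : ℝ) ≤ L := by exact_mod_cast hL
      push_cast; nlinarith
    calc ((L + j : ℕ) + 1 : ℝ) ^ e * ((4 : ℝ) ^ (L + j))⁻¹
        ≤ (L * ((j : ℝ) + 2)) ^ e * ((4 : ℝ) ^ (L + j))⁻¹ := by gcongr
      _ = L ^ e * ((4 : ℝ) ^ L)⁻¹ * g (L + j - L) := by
        rw [Nat.add_sub_cancel_left, mul_pow, pow_add, mul_inv]; ring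
  calc ∑ k ∈ K, ((k : ℝ) + 1) ^ e * ((4 : ℝ) ^ k)⁻¹
      ≤ ∑ k ∈ K, L ^ e * ((4 : ℝ) ^ L)⁻¹ * g (k - L) := sum_le_sum hterm
    _ = L ^ e * ((4 : ℝ) ^ L)⁻¹ * ∑ j ∈ K.image (· - L), g j := by
        rw [mul_sum, sum_image fun x hx y hy h => by have := hK x hx; have := hK y hy; omega]
    _ ≤ L ^ e * ((4 : ℝ) ^ L)⁻¹ * tailConst e := by
        gcongr
        exact (summable_tailConst e).sum_le_tsum _ fun _ _ => by positivity
    _ = tailConst e * L ^ e * ((4 : ℝ) ^ L)⁻¹ := by ring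

theorem sum_inv_four_pow_sum_le {d L : ℕ} (hL : 1 ≤ L) (T : Finset (Fin d → ℕ))
    (hT : ∀ l ∈ T, L ≤ ∑ i, l i) :
    ∑ l ∈ T, ((4 : ℝ) ^ ∑ i, l i)⁻¹ ≤ tailConst (d - 1) * L ^ (d - 1) * ((4 : ℝ) ^ L)⁻¹ := by
  have hfiber (k : ℕ) : (#{l ∈ T | ∑ i, l i = k} : ℝ) ≤ ((k : ℝ) + 1) ^ (d - 1) := by
    have hsub : {l ∈ T | ∑ i, l i = k} ⊆ Nat.antidiagonalTuple d k := fun l hl =>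
      Nat.mem_antidiagonalTuple.mpr (mem_filter.mp hl).2
    exact_mod_cast (card_le_card hsub).trans (card_antidiagonalTuple_le d k)
  calc ∑ l ∈ T, ((4 : ℝ) ^ ∑ i, l i)⁻¹
      = ∑ k ∈ T.image (fun l => (∑ i, l i : ℕ)), #{l ∈ T | ∑ i, l i = k} • ((4 : ℝ) ^ k)⁻¹ :=
        sum_comp (fun k => ((4 : ℝ) ^ k)⁻¹) _
    _ ≤ ∑ k ∈ T.image (fun l => (∑ i, l i : ℕ)), ((k : ℝ) + 1) ^ (d - 1) * ((4 : ℝ) ^ k)⁻¹ := by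
        refine sum_le_sum fun k _ => ?_
        rw [nsmul_eq_mul]
        gcongr
        exact hfiber k
    _ ≤ tailConst (d - 1) * L ^ (d - 1) * ((4 : ℝ) ^ L)⁻¹ :=
        sum_succ_pow_mul_inv_four_pow_le hL _ fun k hk => by
          obtain ⟨l, hl, rfl⟩ := mem_image.mp hk
          exact hT l hl

theorem norm_sub_sum_mixedDiff_le {d : ℕ} {E : Type*} [SeminormedAddCommGroup E] [Module ℝ E]
    {Q : (Fin d → ℕ) → E} {C₁ : ℝ} (hC₁ : 0 ≤ C₁)
    (hbound : ∀ l, ‖mixedDiff Q l‖ ≤ C₁ * ((4 : ℝ) ^ ∑ i, l i)⁻¹)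
    {L M : ℕ} (hL : 1 ≤ L) (hLM : L ≤ M) :
    ‖Q (fun _ => M) - ∑ l ∈ Iic (fun _ => L) with ∑ i, l i ≤ L, mixedDiff Q l‖ ≤
      tailConst (d - 1) * C₁ * L ^ (d - 1) * ((4 : ℝ) ^ L)⁻¹ := by
  rw [← filter_sum_le_Iic_const_eq hLM, ← sum_Iic_mixedDiff Q,
    ← sum_filter_add_sum_filter_not _ (fun l => ∑ i, l i ≤ L), add_sub_cancel_left]
  calc ‖∑ l ∈ Iic (fun _ => M) with ¬∑ i, l i ≤ L, mixedDiff Q l‖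
      ≤ ∑ l ∈ Iic (fun _ => M) with ¬∑ i, l i ≤ L, C₁ * ((4 : ℝ) ^ ∑ i, l i)⁻¹ :=
        (norm_sum_le _ _).trans (sum_le_sum fun l _ => hbound l)
    _ ≤ C₁ * (tailConst (d - 1) * L ^ (d - 1) * ((4 : ℝ) ^ L)⁻¹) := by
        rw [← mul_sum]
        gcongr
        exact sum_inv_four_pow_sum_le hL _ fun l hl => (not_le.mp (mem_filter.mp hl).2).le
    _ = tailConst (d - 1) * C₁ * L ^ (d - 1) * ((4 : ℝ) ^ L)⁻¹ := by ring

theorem combination_technique_convergence_d_dim_general (d : ℕ) :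
    ∃ C : ℝ, 0 < C ∧
      ∀ (E : Type*) (_ : NormedAddCommGroup E), ∀ (_ : NormedSpace ℝ E),
      ∀ (P : E) (Q : (Fin d → ℕ) → E) (DQ : (Fin d → ℕ) → E),
        (∀ l, DQ l = ∑ s : Fin d → Fin 2,
          if (∀ i, (s i : ℕ) ≤ l i) then
            ((-1 : ℝ) ^ (∑ i, (s i : ℕ))) • Q (fun i => l i - (s i : ℕ))
          else 0) →
      ∀ (C₁ : ℝ), 0 < C₁ →
        (∀ l : Fin d → ℕ, ‖DQ l‖ ≤ C₁ * ((4 : ℝ) ^ (∑ i, l i))⁻¹) →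
        Filter.Tendsto (fun m : ℕ => Q (fun _ => m)) Filter.atTop (nhds P) →
      ∀ L : ℕ, 1 ≤ L →
        ‖(∑ l : Fin d → Fin (L + 1),
            if (∑ i, (l i : ℕ)) ≤ L then DQ (fun i => (l i : ℕ)) else 0) - P‖ ≤
          C * C₁ * (L : ℝ) ^ (d - 1) * ((4 : ℝ) ^ L)⁻¹ := by
  refine ⟨tailConst (d - 1), tailConst_pos _, ?_⟩
  intro E _ _ P Q DQ hDQ C₁ hC₁ hbound htend L hL
  -- `congr!` only has to identify two different instances deciding `∀ i : Fin d, _`.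
  obtain rfl : DQ = mixedDiff Q := funext fun l => by rw [hDQ l, mixedDiff]; congr!
  rw [sum_fin_succ_eq_sum_Iic L fun l => if ∑ i, l i ≤ L then mixedDiff Q l else 0,
    ← sum_filter, norm_sub_rev]
  refine le_of_tendsto (htend.sub_const _).norm ?_
  filter_upwards [Filter.eventually_ge_atTop L] with M hM
  exact norm_sub_sum_mixedDiff_le hC₁.le hbound hL hM

/-- Abstract d-dimensional combination-technique convergence. -/
theorem combination_technique_convergence_d_dim (d : ℕ) (hd : 1 ≤ d) :
    ∃ C : ℝ, 0 < C ∧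
      ∀ (E : Type*) (_ : NormedAddCommGroup E), ∀ (_ : NormedSpace ℝ E),
      ∀ (P : E) (Q : (Fin d → ℕ) → E) (DQ : (Fin d → ℕ) → E),
        (∀ l, DQ l = ∑ s : Fin d → Fin 2,
          if (∀ i, (s i : ℕ) ≤ l i) then
            ((-1 : ℝ) ^ (∑ i, (s i : ℕ))) • Q (fun i => l i - (s i : ℕ))
          else 0) →
      ∀ (C₁ : ℝ), 0 < C₁ →
        (∀ l : Fin d → ℕ, ‖DQ l‖ ≤ C₁ * ((4 : ℝ) ^ (∑ i, l i))⁻¹) →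
        Filter.Tendsto (fun m : ℕ => Q (fun _ => m)) Filter.atTop (nhds P) →
      ∀ L : ℕ, 1 ≤ L →
        ‖(∑ l : Fin d → Fin (L + 1),
            if (∑ i, (l i : ℕ)) ≤ L then DQ (fun i => (l i : ℕ)) else 0) - P‖ ≤
          C * C₁ * (L : ℝ) ^ (d - 1) * ((4 : ℝ) ^ L)⁻¹ :=
  combination_technique_convergence_d_dim_general d
end

section
/- (Multilevel Monte Carlo complexity on regular grids in dimension d ≥ 3.) Let d ≥ 3 be an integer and C₁, C₂, C₃ > 0. Let (e_l)_{l≥0}, (v_l)_{l≥0}, (w_l)_{l≥0} be sequences of nonnegative reals satisfying e_l ≤ C₁·2^{−2l}, v_l ≤ C₂·2^{−4l}, and w_l ≤ C₃·2^{(d+2)l} for all l. Then there exists C > 0 such that for every ε ∈ (0,1/2) there exist an integer L ≥ 0 and positive integers M₀,…,M_L with (∑_{l>L} e_l)² + ∑_{l=0}^{L} v_l/M_l ≤ ε² and ∑_{l=0}^{L} M_l·w_l ≤ C·ε^{−1−d/2}. -/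
/-!
The bias beyond level `L` is `O(4^{-L})`, so the finest mesh is chosen with `2^{-L} ≈ √ε`.
With `v_l = O(16^{-l})` and `w_l = O(2^{(d+2)l})`, take `M_l ∝ ε^{-2} ρ^L √(v_l / w_l)`, where
`ρ² = 2^{d-2}` is the growth rate of `v_l w_l`. Then both `∑ v_l / M_l` and `∑ M_l w_l` are
geometric series of ratio `ρ > 1` (here `d ≥ 3` is needed), dominated by the finest level: the
variance is `O(ε²)` and the cost is `O(ε^{-2} ρ^{2L} + 2^{(d+2)L})`, with both terms of order
`ε^{-1-d/2}`.
-/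

open Finset

theorem geom_sum_le_pow_div_sub_one {x : ℝ} (hx : 1 < x) (n : ℕ) :
    ∑ i ∈ range n, x ^ i ≤ x ^ n / (x - 1) := by
  rw [geom_sum_eq hx.ne']
  exact div_le_div_of_nonneg_right (by linarith) (by linarith)

theorem tsum_tail_le_of_le_geometric {e : ℕ → ℝ} {c R : ℝ} (he0 : ∀ l, 0 ≤ e l) (hR : 1 < R)
    (he : ∀ l, e l ≤ c * (R ^ l)⁻¹) (L : ℕ) :
    ∑' l : {n : ℕ // L < n}, e l ≤ c * (R ^ L)⁻¹ / (R - 1) := by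
  have hc : 0 ≤ c := by simpa using (he0 0).trans (he 0)
  have hr0 : 0 ≤ R⁻¹ := inv_nonneg.2 (by linarith)
  have hr1 : R⁻¹ < 1 := inv_lt_one_of_one_lt₀ hR
  have hgeom : Summable fun l : ℕ => (R⁻¹) ^ l := summable_geometric_of_lt_one hr0 hr1
  calc ∑' l : {n : ℕ // L < n}, e l
      ≤ ∑' k : ℕ, c * (R ^ (L + 1))⁻¹ * (R⁻¹) ^ k := by
        refine Summable.tsum_le_tsum_of_inj (fun l => l.1 - (L + 1)) ?_ ?_ ?_ ?_ ?_
        · intro l m h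
          have := l.2; have := m.2
          exact Subtype.ext (by simp only at h; omega)
        · intro k _; positivity
        · rintro ⟨l, hl⟩
          obtain ⟨k, rfl⟩ := Nat.exists_eq_add_of_lt hl
          calc e (L + k + 1) ≤ c * (R ^ (L + k + 1))⁻¹ := he _
            _ = _ := by simp only [show L + k + 1 - (L + 1) = k by omega]; rw [inv_pow]; ring
        · exact ((hgeom.mul_left c).subtype _).of_nonneg_of_le (fun l => he0 l) (fun l => by
            simpa only [Function.comp, inv_pow] using he l)
        · exact hgeom.mul_left _
    _ = c * (R ^ L)⁻¹ / (R - 1) := by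
        rw [tsum_mul_left, tsum_geometric_of_lt_one hr0 hr1]
        have : R - 1 ≠ 0 := (sub_pos.2 hR).ne'
        field_simp
        ring

/-- If `v_l ≈ a^l`, `w_l ≈ b^l` and `a * b = ρ ^ 2`, then `√(v_l / w_l) ≈ (a / ρ)^l`: this is
Giles' optimal number of samples, scaled by `c * ρ ^ L` and rounded up to a positive integer. -/
noncomputable def mlmcSamples (c a ρ : ℝ) (L l : ℕ) : ℕ := ⌊c * ρ ^ L * (a / ρ) ^ l⌋₊ + 1

section mlmcSamples

variable {c a ρ : ℝ} {L : ℕ}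

theorem lt_mlmcSamples (l : ℕ) : c * ρ ^ L * (a / ρ) ^ l < mlmcSamples c a ρ L l := by
  simpa [mlmcSamples] using Nat.lt_floor_add_one (c * ρ ^ L * (a / ρ) ^ l)

theorem mlmcSamples_le (hc : 0 ≤ c) (ha : 0 ≤ a) (hρ : 0 ≤ ρ) (l : ℕ) :
    (mlmcSamples c a ρ L l : ℝ) ≤ c * ρ ^ L * (a / ρ) ^ l + 1 := by
  simpa [mlmcSamples] using Nat.floor_le (by positivity : 0 ≤ c * ρ ^ L * (a / ρ) ^ l)

theorem sum_div_mlmcSamples_le {v : ℕ → ℝ} {V : ℝ} (hV : 0 ≤ V) (hc : 0 < c) (ha : 0 < a)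
    (hρ : 1 < ρ) (hv : ∀ l, v l ≤ V * a ^ l) :
    ∑ l ∈ range (L + 1), v l / mlmcSamples c a ρ L l ≤ V / c * (ρ / (ρ - 1)) := by
  have hρ0 : 0 < ρ := by linarith
  calc ∑ l ∈ range (L + 1), v l / mlmcSamples c a ρ L l
      ≤ ∑ l ∈ range (L + 1), V / c / ρ ^ L * ρ ^ l := by
        refine sum_le_sum fun l _ => ?_
        calc v l / mlmcSamples c a ρ L l ≤ V * a ^ l / (c * ρ ^ L * (a / ρ) ^ l) :=
              div_le_div₀ (by positivity) (hv l) (by positivity) (lt_mlmcSamples l).le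
          _ = V / c / ρ ^ L * ρ ^ l := by rw [div_pow]; field_simp
    _ ≤ V / c / ρ ^ L * (ρ ^ (L + 1) / (ρ - 1)) := by
        rw [← mul_sum]; gcongr; exact geom_sum_le_pow_div_sub_one hρ _
    _ = V / c * (ρ / (ρ - 1)) := by rw [pow_succ]; field_simp

theorem sum_mlmcSamples_mul_le {w : ℕ → ℝ} {W b : ℝ} (hW : 0 ≤ W) (hc : 0 ≤ c) (ha : 0 ≤ a)
    (hρ : 1 < ρ) (hb : 1 < b) (hab : a * b = ρ ^ 2) (hw : ∀ l, w l ≤ W * b ^ l) :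
    ∑ l ∈ range (L + 1), mlmcSamples c a ρ L l * w l
      ≤ c * W * (ρ / (ρ - 1)) * (ρ ^ 2) ^ L + W * (b / (b - 1)) * b ^ L := by
  have hρ0 : 0 < ρ := by linarith
  calc ∑ l ∈ range (L + 1), mlmcSamples c a ρ L l * w l
      ≤ ∑ l ∈ range (L + 1), (c * W * ρ ^ L * ρ ^ l + W * b ^ l) := by
        refine sum_le_sum fun l _ => ?_
        calc (mlmcSamples c a ρ L l : ℝ) * w l
            ≤ mlmcSamples c a ρ L l * (W * b ^ l) := by gcongr; exact hw l
          _ ≤ (c * ρ ^ L * (a / ρ) ^ l + 1) * (W * b ^ l) := by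
              gcongr; exact mlmcSamples_le hc ha hρ0.le l
          _ = c * W * ρ ^ L * (a * b / ρ) ^ l + W * b ^ l := by ring
          _ = c * W * ρ ^ L * ρ ^ l + W * b ^ l := by
              rw [hab, sq, mul_div_cancel_right₀ _ hρ0.ne']
    _ ≤ c * W * ρ ^ L * (ρ ^ (L + 1) / (ρ - 1)) + W * (b ^ (L + 1) / (b - 1)) := by
        rw [sum_add_distrib, ← mul_sum, ← mul_sum]
        gcongr
        · exact geom_sum_le_pow_div_sub_one hρ _
        · exact geom_sum_le_pow_div_sub_one hb _
    _ = c * W * (ρ / (ρ - 1)) * (ρ ^ 2) ^ L + W * (b / (b - 1)) * b ^ L := by ring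

end mlmcSamples

theorem mlmc_mse_le {e v : ℕ → ℝ} {C₁ C₂ a ρ ε : ℝ} {L : ℕ} (he0 : ∀ l, 0 ≤ e l)
    (he : ∀ l, e l ≤ C₁ * ((4 : ℝ) ^ l)⁻¹) (hC₂ : 0 < C₂) (ha : 0 < a)
    (hv : ∀ l, v l ≤ C₂ * a ^ l) (hρ : 1 < ρ) (hε : 0 < ε) (hL : C₁ ≤ ε * 4 ^ L) :
    (∑' l : {n : ℕ // L < n}, e l) ^ 2
        + ∑ l ∈ range (L + 1), v l / mlmcSamples (2 * C₂ * (ρ / (ρ - 1)) / ε ^ 2) a ρ L l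
      ≤ ε ^ 2 := by
  have hρ1 : 0 < ρ - 1 := sub_pos.2 hρ
  have hbias : ∑' l : {n : ℕ // L < n}, e l ≤ ε / 3 := by
    refine (tsum_tail_le_of_le_geometric he0 (by norm_num) he L).trans ?_
    rw [← div_eq_mul_inv, div_div, div_le_div_iff₀ (by positivity) (by norm_num)]
    linarith
  have hvar : ∑ l ∈ range (L + 1), v l / mlmcSamples (2 * C₂ * (ρ / (ρ - 1)) / ε ^ 2) a ρ L l
      ≤ ε ^ 2 / 2 :=
    (sum_div_mlmcSamples_le hC₂.le (by positivity) ha hρ hv).trans_eq (by field_simp)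
  calc _ ≤ (ε / 3) ^ 2 + ε ^ 2 / 2 :=
        add_le_add (pow_le_pow_left₀ (tsum_nonneg fun _ => he0 _) hbias 2) hvar
    _ ≤ ε ^ 2 := by nlinarith [pow_pos hε 2]

theorem exists_le_sq_mul_four_pow_and_two_pow_le {K t : ℝ} (hK : 1 ≤ K) (ht0 : 0 < t)
    (ht1 : t ≤ 1) : ∃ L : ℕ, K ≤ t ^ 2 * 4 ^ L ∧ (2 : ℝ) ^ L ≤ 2 * K * t⁻¹ := by
  obtain ⟨n, hn_le, hn_lt⟩ :=
    exists_nat_pow_near (one_le_mul_of_one_le_of_one_le hK (one_le_inv₀ ht0 |>.2 ht1)) one_lt_two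
  have hKt : K < t * 2 ^ (n + 1) := by rwa [← inv_mul_lt_iff₀ ht0, mul_comm]
  refine ⟨n + 1, ?_, by rw [pow_succ]; linarith⟩
  calc K ≤ K ^ 2 := by nlinarith
    _ ≤ (t * 2 ^ (n + 1)) ^ 2 := by gcongr
    _ = t ^ 2 * 4 ^ (n + 1) := by rw [mul_pow, pow_right_comm]; norm_num

theorem sq_rpow_neg_one_sub_div_two {t : ℝ} (ht : 0 < t) (d : ℕ) :
    (t ^ 2) ^ (-(1 : ℝ) - (d : ℝ) / 2) = (t⁻¹) ^ (d + 2) := by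
  rw [← Real.rpow_natCast t 2, ← Real.rpow_mul ht.le, inv_pow, ← Real.rpow_natCast t (d + 2),
    ← Real.rpow_neg ht.le]
  congr 1
  push_cast
  ring

theorem regular_grid_cost_le {d L : ℕ} (hd : 2 ≤ d) {A B K t : ℝ} (hA : 0 ≤ A) (hB : 0 ≤ B)
    (ht : 0 < t) (hL : (2 : ℝ) ^ L ≤ K * t⁻¹) :
    A / (t ^ 2) ^ 2 * ((2 : ℝ) ^ (d - 2)) ^ L + B * ((2 : ℝ) ^ (d + 2)) ^ L
      ≤ (A * K ^ (d - 2) + B * K ^ (d + 2)) * (t ^ 2) ^ (-(1 : ℝ) - (d : ℝ) / 2) := by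
  rw [pow_right_comm (2 : ℝ) (d - 2), pow_right_comm (2 : ℝ) (d + 2),
    sq_rpow_neg_one_sub_div_two ht]
  calc _ ≤ A / (t ^ 2) ^ 2 * (K * t⁻¹) ^ (d - 2) + B * (K * t⁻¹) ^ (d + 2) := by gcongr
    _ = _ := by rw [show d + 2 = d - 2 + 4 by omega, div_eq_mul_inv, ← pow_mul, ← inv_pow]; ring

theorem mlmc_regular_grid_complexity_general
    (d : ℕ) (hd : 3 ≤ d) (C₁ C₂ C₃ : ℝ) (hC₂ : 0 < C₂) (hC₃ : 0 < C₃)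
    (e v w : ℕ → ℝ)
    (he0 : ∀ l, 0 ≤ e l)
    (he : ∀ l, e l ≤ C₁ * ((2 : ℝ) ^ (2 * l))⁻¹)
    (hv : ∀ l, v l ≤ C₂ * ((2 : ℝ) ^ (4 * l))⁻¹)
    (hw : ∀ l, w l ≤ C₃ * (2 : ℝ) ^ ((d + 2) * l)) :
    ∃ C : ℝ, 0 < C ∧ ∀ ε : ℝ, 0 < ε → ε < 1 / 2 →
      ∃ (L : ℕ) (M : ℕ → ℕ), (∀ l ≤ L, 0 < M l) ∧
        (∑' l : {n : ℕ // L < n}, e l) ^ 2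
            + ∑ l ∈ Finset.range (L + 1), v l / (M l : ℝ) ≤ ε ^ 2 ∧
        ∑ l ∈ Finset.range (L + 1), (M l : ℝ) * w l ≤
          C * ε ^ (-(1 : ℝ) - (d : ℝ) / 2) := by
  set ρ : ℝ := √2 ^ (d - 2)
  have hρ : 1 < ρ := one_lt_pow₀ Real.one_lt_sqrt_two (by omega)
  have hρ_sq : ρ ^ 2 = 2 ^ (d - 2) := by rw [← pow_mul, mul_comm, pow_mul, Real.sq_sqrt zero_le_two]
  have hab : (2 ^ 4 : ℝ)⁻¹ * 2 ^ (d + 2) = ρ ^ 2 := by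
    rw [hρ_sq, show d + 2 = d - 2 + 4 by omega, pow_add]; field_simp
  set b : ℝ := 2 ^ (d + 2)
  have hb : 1 < b := one_lt_pow₀ one_lt_two (by omega)
  have hρ1 : 0 < ρ - 1 := sub_pos.2 hρ
  have hb1 : 0 < b - 1 := sub_pos.2 hb
  set κ := max C₁ 1
  refine ⟨2 * C₂ * C₃ * (ρ / (ρ - 1)) ^ 2 * (2 * κ) ^ (d - 2)
    + C₃ * (b / (b - 1)) * (2 * κ) ^ (d + 2), by positivity, fun ε hε hε_half => ?_⟩
  -- writing `ε = t ^ 2` makes `ε ^ (-1 - d / 2) = t⁻¹ ^ (d + 2)` a natural power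
  obtain ⟨t, ht, rfl⟩ : ∃ t, 0 < t ∧ ε = t ^ 2 := ⟨√ε, by positivity, (Real.sq_sqrt hε.le).symm⟩
  obtain ⟨L, hL_bias, hL_mesh⟩ :=
    exists_le_sq_mul_four_pow_and_two_pow_le (le_max_right C₁ 1) ht (by nlinarith)
  refine ⟨L, mlmcSamples (2 * C₂ * (ρ / (ρ - 1)) / (t ^ 2) ^ 2) (2 ^ 4)⁻¹ ρ L,
    fun _ _ => Nat.succ_pos _, ?_, ?_⟩
  · refine mlmc_mse_le he0 (fun l => ?_) hC₂ (by norm_num) (fun l => ?_) hρ hε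
      ((le_max_left _ _).trans hL_bias)
    · rw [show (4 : ℝ) = 2 ^ 2 by norm_num, ← pow_mul]; exact he l
    · rw [inv_pow, ← pow_mul]; exact hv l
  calc _ ≤ _ := sum_mlmcSamples_mul_le hC₃.le (by positivity) (by positivity) hρ hb hab
          (fun l => by rw [← pow_mul]; exact hw l)
    _ = 2 * C₂ * C₃ * (ρ / (ρ - 1)) ^ 2 / (t ^ 2) ^ 2 * ((2 : ℝ) ^ (d - 2)) ^ L
          + C₃ * (b / (b - 1)) * b ^ L := by rw [hρ_sq]; ring
    _ ≤ _ := regular_grid_cost_le (by omega) (by positivity) (by positivity) ht hL_mesh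

/-- Multilevel Monte Carlo complexity on regular grids in dimension `d ≥ 3`:
total cost `O(ε^{−1−d/2})`. -/
theorem mlmc_regular_grid_complexity
    (d : ℕ) (hd : 3 ≤ d) (C₁ C₂ C₃ : ℝ) (hC₁ : 0 < C₁) (hC₂ : 0 < C₂) (hC₃ : 0 < C₃)
    (e v w : ℕ → ℝ)
    (he0 : ∀ l, 0 ≤ e l) (hv0 : ∀ l, 0 ≤ v l) (hw0 : ∀ l, 0 ≤ w l)
    (he : ∀ l, e l ≤ C₁ * ((2 : ℝ) ^ (2 * l))⁻¹)
    (hv : ∀ l, v l ≤ C₂ * ((2 : ℝ) ^ (4 * l))⁻¹)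
    (hw : ∀ l, w l ≤ C₃ * (2 : ℝ) ^ ((d + 2) * l)) :
    ∃ C : ℝ, 0 < C ∧ ∀ ε : ℝ, 0 < ε → ε < 1 / 2 →
      ∃ (L : ℕ) (M : ℕ → ℕ), (∀ l ≤ L, 0 < M l) ∧
        (∑' l : {n : ℕ // L < n}, e l) ^ 2
            + ∑ l ∈ Finset.range (L + 1), v l / (M l : ℝ) ≤ ε ^ 2 ∧
        ∑ l ∈ Finset.range (L + 1), (M l : ℝ) * w l ≤
          C * ε ^ (-(1 : ℝ) - (d : ℝ) / 2) :=
  mlmc_regular_grid_complexity_general d hd C₁ C₂ C₃ hC₂ hC₃ e v w he0 he hv hw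
end
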